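/- Let the CII estimate be Î_K = Σ_{ℓ=0}^{n−k} C(n−k,ℓ)·λ_{k,ℓ}·Σ_{W⊆K} (−1)^{k−|W|}·Î_{K,ℓ}^W, where for every W ⊆ K and ℓ ∈ L^{|W|} the stratum estimate Î_{K,ℓ}^W follows the stratum sampling model with count M_{W,ℓ} = 1 + Y_{W,ℓ}, Y_{W,ℓ} binomially distributed with parameters B̃ ≥ 1 and p_{W,ℓ} ≥ 1/γ_k, the sample sequences of distinct estimated strata being mutually independent and independent of the vector of all counts, and Î_{K,ℓ}^W = I_{K,ℓ}^W for ℓ ∉ L^{|W|}. Then the mean squared error satisfies E[(Î_K − I_K)²] ≤ (γ_k/B̃)·Σ_{W⊆K} Σ_{ℓ∈L^{|W|}} C(n−k,ℓ)²·λ_{k,ℓ}²·σ²_{K,ℓ,W}. -/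

import Mathlib

open MeasureTheory ProbabilityTheory Finset
open scoped ENNReal

/-- Finsets carry the discrete σ-algebra. -/
instance finsetMeasurableSpace (n : ℕ) : MeasurableSpace (Finset (Fin n)) := ⊤

/-- The stratum `{S ⊆ N∖K : |S| = ℓ}`. -/
def strata (n : ℕ) (K : Finset (Fin n)) (ℓ : ℕ) : Finset (Finset (Fin n)) :=
  Kᶜ.powerset.filter (fun S => S.card = ℓ)

/-- The stratum value `I_{K,ℓ}^W = (1/C(n−k,ℓ))·Σ_{S ⊆ N∖K, |S|=ℓ} ν(S ∪ W)`. -/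
noncomputable def stratVal (n : ℕ) (ν : Finset (Fin n) → ℝ)
    (K W : Finset (Fin n)) (ℓ : ℕ) : ℝ :=
  (((n - K.card).choose ℓ : ℝ))⁻¹ * ∑ S ∈ strata n K ℓ, ν (S ∪ W)

/-- The stratum variance `σ²_{K,ℓ,W}`: the variance of `ν(S ∪ W)` for `S` uniformly
distributed on `{S ⊆ N∖K : |S| = ℓ}`. -/
noncomputable def stratVar (n : ℕ) (ν : Finset (Fin n) → ℝ)
    (K W : Finset (Fin n)) (ℓ : ℕ) : ℝ :=
  (((n - K.card).choose ℓ : ℝ))⁻¹ *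
    ∑ S ∈ strata n K ℓ, (ν (S ∪ W) - stratVal n ν K W ℓ) ^ 2

/-- The cardinal interaction index `I_K`. -/
noncomputable def CII (n : ℕ) (ν : Finset (Fin n) → ℝ) (lam : ℕ → ℝ)
    (K : Finset (Fin n)) : ℝ :=
  ∑ S ∈ Kᶜ.powerset, lam S.card *
    ∑ W ∈ K.powerset, (-1 : ℝ) ^ (K.card - W.card) * ν (S ∪ W)

/-- The constants `γ_2 = 2(n−1)²` and `γ_k = n^{k−1}·(n−k+1)²` for `k ≥ 3`. -/
noncomputable def gam (n k : ℕ) : ℝ :=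
  if k = 2 then 2 * ((n : ℝ) - 1) ^ 2
  else (n : ℝ) ^ (k - 1) * ((n : ℝ) - k + 1) ^ 2

/-- The stratum estimate: sample mean for estimated strata, exact value otherwise. -/
noncomputable def IhatStrat {Ω : Type*} (n : ℕ) (ν : Finset (Fin n) → ℝ)
    (K : Finset (Fin n)) (L : ℕ → Finset ℕ)
    (S : Finset (Fin n) → ℕ → ℕ → Ω → Finset (Fin n))
    (M : Finset (Fin n) → ℕ → Ω → ℕ) (W : Finset (Fin n)) (ℓ : ℕ) (ω : Ω) : ℝ :=
  if ℓ ∈ L W.card then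
    ((M W ℓ ω : ℝ))⁻¹ * ∑ m ∈ Finset.range (M W ℓ ω), ν (S W ℓ m ω ∪ W)
  else stratVal n ν K W ℓ

/-- The CII estimate `Î_K`. -/
noncomputable def IhatCII {Ω : Type*} (n : ℕ) (ν : Finset (Fin n) → ℝ)
    (K : Finset (Fin n)) (lam : ℕ → ℝ) (L : ℕ → Finset ℕ)
    (S : Finset (Fin n) → ℕ → ℕ → Ω → Finset (Fin n))
    (M : Finset (Fin n) → ℕ → Ω → ℕ) (ω : Ω) : ℝ :=
  ∑ ℓ ∈ Finset.range (n - K.card + 1), ((n - K.card).choose ℓ : ℝ) * lam ℓ *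
    ∑ W ∈ K.powerset, (-1 : ℝ) ^ (K.card - W.card) * IhatStrat n ν K L S M W ℓ ω

/-- The index set of estimated strata: pairs `(W, ℓ)` with `W ⊆ K` and `ℓ ∈ L^{|W|}`. -/
def EstIdx (n : ℕ) (K : Finset (Fin n)) (L : ℕ → Finset ℕ) : Type :=
  {p : Finset (Fin n) × ℕ // p.1 ⊆ K ∧ p.2 ∈ L p.1.card}

/-!
The error `Î_K - I_K` is a linear combination, with coefficients `± C(n-k,ℓ) λ_{k,ℓ}`, of the
errors `Î_{K,ℓ}^W - I_{K,ℓ}^W` of the estimated strata. Conditionally on the counts, which are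
independent of the samples, these errors are independent across strata and centred, so they are
orthogonal in `L²` and the mean squared error is the weighted sum of their second moments.
Conditionally on `M = m` the second moment of a stratum error is `σ² / m`, so it equals
`σ² E[1/M]`, and for `M = 1 + Bin(B̃, p)` one has `E[1/M] ≤ 1 / ((B̃+1) p) ≤ γ_k / B̃`.
-/

section Conditioning

variable {Ω : Type*} [MeasurableSpace Ω] {μ : Measure Ω}

theorem integral_comp_eq_sum_of_indepFun [IsFiniteMeasure μ] {α β : Type*} [MeasurableSpace α]
    [MeasurableSingletonClass α] [MeasurableSpace β] {N : Ω → α} {Z : Ω → β}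
    (hN : Measurable N) (hNZ : IndepFun N Z μ) {s : Finset α} (hs : ∀ᵐ ω ∂μ, N ω ∈ s)
    {g : α → β → ℝ} (hg : ∀ a, Measurable (g a))
    (hgZ : ∀ a ∈ s, Integrable (fun ω => g a (Z ω)) μ) :
    ∫ ω, g (N ω) (Z ω) ∂μ = ∑ a ∈ s, μ.real {ω | N ω = a} * ∫ ω, g a (Z ω) ∂μ := by
  have hsplit : (fun ω => g (N ω) (Z ω)) =ᵐ[μ]
      fun ω => ∑ a ∈ s, ({a} : Set α).indicator 1 (N ω) * g a (Z ω) := by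
    filter_upwards [hs] with ω hω
    rw [sum_eq_single_of_mem _ hω fun b _ hb => by simp [Ne.symm hb]]
    simp
  have hind : ∀ a, Measurable (({a} : Set α).indicator (1 : α → ℝ)) := fun a =>
    measurable_one.indicator (measurableSet_singleton a)
  have hint : ∀ a, Integrable (fun ω => ({a} : Set α).indicator (1 : α → ℝ) (N ω)) μ := fun a =>
    (integrable_const 1).indicator (hN (measurableSet_singleton a))
  have hterm : ∀ a ∈ s, ∫ ω, ({a} : Set α).indicator 1 (N ω) * g a (Z ω) ∂μ
      = μ.real {ω | N ω = a} * ∫ ω, g a (Z ω) ∂μ := fun a ha => by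
    have h := (hNZ.comp (hind a) (hg a)).integral_mul_eq_mul_integral
      (hint a).aestronglyMeasurable (hgZ a ha).aestronglyMeasurable
    simp only [Pi.mul_apply, Function.comp_apply] at h
    rw [h, ← integral_indicator_one (s := {ω | N ω = a}) (hN (measurableSet_singleton a))]
    rfl
  rw [integral_congr_ae hsplit, integral_finsetSum _ fun a ha =>
    (hgZ a ha).bdd_mul (c := 1) (hint a).aestronglyMeasurable
      (ae_of_all _ fun ω => by by_cases h : N ω = a <;> simp [h])]
  exact sum_congr rfl hterm

variable [IsProbabilityMeasure μ]

theorem integral_comp_eq_sum_of_ae_mem {α : Type*} [MeasurableSpace α]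
    [MeasurableSingletonClass α] {N : Ω → α} (hN : Measurable N) {s : Finset α}
    (hs : ∀ᵐ ω ∂μ, N ω ∈ s) (f : α → ℝ) :
    ∫ ω, f (N ω) ∂μ = ∑ a ∈ s, μ.real {ω | N ω = a} * f a := by
  simpa using integral_comp_eq_sum_of_indepFun hN (indepFun_const_right N ()) hs
    (g := fun a _ => f a) (fun _ => measurable_const) fun _ _ => integrable_const _

theorem integral_comp_eq_of_uniform {α : Type*} [Fintype α] [DecidableEq α] [MeasurableSpace α]
    [MeasurableSingletonClass α] {T : Ω → α} (hT : Measurable T) {A : Finset α}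
    (hunif : ∀ a, μ {ω | T ω = a} = if a ∈ A then (A.card : ℝ≥0∞)⁻¹ else 0) (g : α → ℝ) :
    ∫ ω, g (T ω) ∂μ = (A.card : ℝ)⁻¹ * ∑ a ∈ A, g a := by
  rw [integral_comp_eq_sum_of_ae_mem hT (ae_of_all _ fun ω => mem_univ (T ω)) g, mul_sum]
  simp_rw [measureReal_def, hunif, apply_ite ENNReal.toReal, ite_mul]
  simp

end Conditioning

theorem integral_sum_sq_of_orthogonal {Ω ι : Type*} [MeasurableSpace Ω] {μ : Measure Ω}
    (s : Finset ι) {f : ι → Ω → ℝ} (hf : ∀ i ∈ s, MemLp (f i) 2 μ)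
    (horth : ∀ i ∈ s, ∀ j ∈ s, i ≠ j → ∫ ω, f i ω * f j ω ∂μ = 0) :
    ∫ ω, (∑ i ∈ s, f i ω) ^ 2 ∂μ = ∑ i ∈ s, ∫ ω, f i ω ^ 2 ∂μ := by
  have hint : ∀ i ∈ s, ∀ j ∈ s, Integrable (fun ω => f i ω * f j ω) μ := fun i hi j hj =>
    (hf i hi).integrable_mul (hf j hj)
  simp_rw [sq, sum_mul_sum]
  rw [integral_finsetSum _ fun i hi => integrable_finsetSum _ fun j hj => hint i hi j hj]
  refine sum_congr rfl fun i hi => ?_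
  rw [integral_finsetSum _ fun j hj => hint i hi j hj,
    sum_eq_single_of_mem i hi fun j hj hji => horth i hi j hj hji.symm]

section ShiftedBinomial

theorem sum_choose_mul_pow_mul_one_sub_pow (B : ℕ) (p : ℝ) :
    ∑ j ∈ range (B + 1), (B.choose j : ℝ) * p ^ j * (1 - p) ^ (B - j) = 1 := by
  have h := add_pow p (1 - p) B
  rw [add_sub_cancel, one_pow] at h
  exact (sum_congr rfl fun j _ => by ring).trans h.symm

theorem sum_choose_mul_pow_div_succ_le (B : ℕ) {p : ℝ} (hp : 0 < p) (hp1 : p ≤ 1) :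
    ∑ j ∈ range (B + 1), (B.choose j : ℝ) * p ^ j * (1 - p) ^ (B - j) / (j + 1)
      ≤ ((B + 1) * p)⁻¹ := by
  -- `C(B, j) / (j + 1) = C(B + 1, j + 1) / (B + 1)` turns the sum into a tail of a binomial sum
  have hterm : ∀ j ∈ range (B + 1), (B.choose j : ℝ) * p ^ j * (1 - p) ^ (B - j) / (j + 1)
      = ((B + 1) * p)⁻¹ * (((B + 1).choose (j + 1) : ℝ) * p ^ (j + 1) * (1 - p) ^ (B - j)) := by
    intro j _
    have h := congrArg (Nat.cast : ℕ → ℝ) (Nat.add_one_mul_choose_eq B j)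
    push_cast at h
    field_simp
    linear_combination p ^ j * (1 - p) ^ (B - j) * p * h
  have htail : ∑ j ∈ range (B + 1), ((B + 1).choose (j + 1) : ℝ) * p ^ (j + 1) * (1 - p) ^ (B - j)
      + (1 - p) ^ (B + 1) = 1 := by
    have h := sum_choose_mul_pow_mul_one_sub_pow (B + 1) p
    rw [sum_range_succ'] at h
    simpa using h
  rw [sum_congr rfl hterm, ← mul_sum]
  refine mul_le_of_le_one_right (by positivity) ?_
  linarith [pow_nonneg (sub_nonneg.2 hp1) (B + 1)]

variable {Ω : Type*} [MeasurableSpace Ω] {μ : Measure Ω} [IsProbabilityMeasure μ]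
  {N : Ω → ℕ} {B : ℕ} {p : ℝ}

theorem ae_mem_image_succ_of_shiftedBinomial (hN : Measurable N) (hp0 : 0 ≤ p) (hp1 : p ≤ 1)
    (hbin : ∀ j, μ {ω | N ω = j + 1}
      = ENNReal.ofReal (B.choose j * p ^ j * (1 - p) ^ (B - j))) :
    ∀ᵐ ω ∂μ, N ω ∈ (range (B + 1)).image (· + 1) := by
  have hmeas : MeasurableSet {ω | N ω ∈ (range (B + 1)).image (· + 1)} :=
    hN MeasurableSet.of_discrete
  rw [ae_iff_measure_eq hmeas.nullMeasurableSet, measure_univ]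
  change μ (N ⁻¹' ↑((range (B + 1)).image (· + 1))) = 1
  rw [← sum_measure_preimage_singleton _ fun m _ => hN (measurableSet_singleton m),
    sum_image (by simp)]
  simp only [Set.preimage, Set.mem_singleton_iff, hbin]
  rw [← ENNReal.ofReal_sum_of_nonneg fun j _ => by positivity,
    sum_choose_mul_pow_mul_one_sub_pow, ENNReal.ofReal_one]

theorem integral_inv_le_of_shiftedBinomial (hN : Measurable N) (hp : 0 < p) (hp1 : p ≤ 1)
    (hbin : ∀ j, μ {ω | N ω = j + 1}
      = ENNReal.ofReal (B.choose j * p ^ j * (1 - p) ^ (B - j))) :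
    ∫ ω, (N ω : ℝ)⁻¹ ∂μ ≤ ((B + 1) * p)⁻¹ := by
  rw [integral_comp_eq_sum_of_ae_mem hN (ae_mem_image_succ_of_shiftedBinomial hN hp.le hp1 hbin)
    fun m => (m : ℝ)⁻¹, sum_image (by simp)]
  refine le_of_eq_of_le (sum_congr rfl fun j _ => ?_) (sum_choose_mul_pow_div_succ_le B hp hp1)
  rw [measureReal_def, hbin, ENNReal.toReal_ofReal (by positivity)]
  push_cast
  ring

end ShiftedBinomial

section SampleMean

/-- Note the junk value `sampleMean x 0 = 0`. -/
noncomputable def sampleMean (x : ℕ → ℝ) (m : ℕ) : ℝ := (m : ℝ)⁻¹ * ∑ j ∈ range m, x j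

theorem abs_sampleMean_le {x : ℕ → ℝ} {C : ℝ} (hx : ∀ j, |x j| ≤ C) (m : ℕ) :
    |sampleMean x m| ≤ C := by
  rcases Nat.eq_zero_or_pos m with rfl | hm
  · simpa [sampleMean] using (abs_nonneg _).trans (hx 0)
  · rw [sampleMean, abs_mul, abs_inv, Nat.abs_cast, inv_mul_le_iff₀ (by exact_mod_cast hm)]
    calc |∑ j ∈ range m, x j| ≤ ∑ j ∈ range m, |x j| := abs_sum_le_sum_abs _ _
      _ ≤ ∑ _j ∈ range m, C := sum_le_sum fun j _ => hx j
      _ = m * C := by simp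

theorem measurable_sampleMean (m : ℕ) : Measurable fun x : ℕ → ℝ => sampleMean x m :=
  (Finset.measurable_sum _ fun j _ => measurable_pi_apply j).const_mul _

variable {Ω : Type*} [MeasurableSpace Ω] {μ : Measure Ω} {X : ℕ → Ω → ℝ} {N : Ω → ℕ}
  {a v : ℝ}

theorem measurable_sampleMean_randomCount (hX : ∀ j, Measurable (X j)) (hN : Measurable N) :
    Measurable fun ω => sampleMean (X · ω) (N ω) :=
  (measurable_from_prod_countable_left (f := fun q : Ω × ℕ => sampleMean (X · q.1) q.2)
    fun m => (measurable_sampleMean m).comp (measurable_pi_lambda _ hX)).comp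
    (measurable_id.prodMk hN)

theorem memLp_sampleMean_randomCount [IsFiniteMeasure μ] (hX : ∀ j, Measurable (X j))
    {C : ℝ} (hXC : ∀ j ω, |X j ω| ≤ C) (hN : Measurable N) (p : ℝ≥0∞) :
    MemLp (fun ω => sampleMean (X · ω) (N ω)) p μ :=
  MemLp.of_bound (measurable_sampleMean_randomCount hX hN).aestronglyMeasurable C
    (ae_of_all _ fun ω => abs_sampleMean_le (fun j => hXC j ω) (N ω))

theorem memLp_sampleMean (hX : ∀ j, MemLp (X j) 2 μ) (m : ℕ) :
    MemLp (fun ω => sampleMean (X · ω) m) 2 μ :=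
  (memLp_finsetSum (range m) fun j _ => hX j).const_mul _

theorem integral_sampleMean (hX : ∀ j, Integrable (X j) μ) (hmean : ∀ j, μ[X j] = a) {m : ℕ}
    (hm : m ≠ 0) : ∫ ω, sampleMean (X · ω) m ∂μ = a := by
  simp only [sampleMean]
  rw [integral_const_mul, integral_finsetSum _ fun j _ => hX j]
  simp [hmean, hm]

variable [IsProbabilityMeasure μ]

theorem integral_sampleMean_sub_sq (hX : ∀ j, MemLp (X j) 2 μ)
    (hindep : Pairwise fun i j => IndepFun (X i) (X j) μ) (hmean : ∀ j, μ[X j] = a)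
    (hvar : ∀ j, variance (X j) μ = v) {m : ℕ} (hm : m ≠ 0) :
    ∫ ω, (sampleMean (X · ω) m - a) ^ 2 ∂μ = v / m := by
  have hvarMean : variance (fun ω => sampleMean (X · ω) m) μ = v / m := by
    have hfun : (fun ω => sampleMean (X · ω) m)
        = fun ω => (m : ℝ)⁻¹ * (∑ j ∈ range m, X j) ω := by
      simp [sampleMean, Finset.sum_apply]
    rw [hfun, variance_const_mul, IndepFun.variance_sum (fun j _ => hX j)
      fun i _ j _ hij => hindep hij]
    simp only [hvar, sum_const, card_range, nsmul_eq_mul]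
    field_simp
  rw [← hvarMean, variance_eq_integral (memLp_sampleMean hX m).aemeasurable,
    integral_sampleMean (fun j => (hX j).integrable one_le_two) hmean hm]

theorem integral_sampleMean_randomCount_sub_sq (hX : ∀ j, MemLp (X j) 2 μ)
    (hindep : Pairwise fun i j => IndepFun (X i) (X j) μ) (hmean : ∀ j, μ[X j] = a)
    (hvar : ∀ j, variance (X j) μ = v) (hN : Measurable N)
    (hNX : IndepFun N (fun ω j => X j ω) μ) {s : Finset ℕ} (hs : ∀ᵐ ω ∂μ, N ω ∈ s)
    (hs₀ : 0 ∉ s) :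
    ∫ ω, (sampleMean (X · ω) (N ω) - a) ^ 2 ∂μ = v * ∫ ω, (N ω : ℝ)⁻¹ ∂μ := by
  rw [integral_comp_eq_sum_of_indepFun hN hNX hs (g := fun m x => (sampleMean x m - a) ^ 2)
      (fun m => ((measurable_sampleMean m).sub_const a).pow_const 2)
      fun m _ => ((memLp_sampleMean hX m).sub (memLp_const a)).integrable_sq,
    integral_comp_eq_sum_of_ae_mem hN hs fun m => (m : ℝ)⁻¹, mul_sum]
  refine sum_congr rfl fun m hm => ?_
  rw [integral_sampleMean_sub_sq hX hindep hmean hvar (ne_of_mem_of_not_mem hm hs₀)]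
  ring

theorem integral_sampleMean_randomCount_mul_eq_zero {Y : ℕ → Ω → ℝ} {N' : Ω → ℕ} {b : ℝ}
    (hX : ∀ j, MemLp (X j) 2 μ) (hY : ∀ j, MemLp (Y j) 2 μ) (hmean : ∀ j, μ[X j] = a)
    (hXY : IndepFun (fun ω j => X j ω) (fun ω j => Y j ω) μ)
    (hN : Measurable N) (hN' : Measurable N')
    (hNXY : IndepFun (fun ω => (N ω, N' ω)) (fun ω => ((fun j => X j ω), fun j => Y j ω)) μ)
    {s : Finset ℕ} (hs : ∀ᵐ ω ∂μ, N ω ∈ s) (hs' : ∀ᵐ ω ∂μ, N' ω ∈ s) (hs₀ : 0 ∉ s) :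
    ∫ ω, (sampleMean (X · ω) (N ω) - a) * (sampleMean (Y · ω) (N' ω) - b) ∂μ = 0 := by
  have hcentred : ∀ m ∈ s, ∀ m',
      ∫ ω, (sampleMean (X · ω) m - a) * (sampleMean (Y · ω) m' - b) ∂μ = 0 := by
    intro m hm m'
    have h := (hXY.comp ((measurable_sampleMean m).sub_const a)
      ((measurable_sampleMean m').sub_const b)).integral_mul_eq_mul_integral
      ((memLp_sampleMean hX m).sub (memLp_const a)).aestronglyMeasurable
      ((memLp_sampleMean hY m').sub (memLp_const b)).aestronglyMeasurable
    simp only [Pi.mul_apply, Function.comp_apply] at h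
    rw [h, integral_sub ((memLp_sampleMean hX m).integrable one_le_two) (integrable_const a),
      integral_sampleMean (fun j => (hX j).integrable one_le_two) hmean
        (ne_of_mem_of_not_mem hm hs₀)]
    simp
  have hpair : ∀ᵐ ω ∂μ, (N ω, N' ω) ∈ s ×ˢ s := by
    filter_upwards [hs, hs'] with ω h h' using mem_product.2 ⟨h, h'⟩
  rw [integral_comp_eq_sum_of_indepFun (hN.prodMk hN') hNXY hpair
    (g := fun mm xy => (sampleMean xy.1 mm.1 - a) * (sampleMean xy.2 mm.2 - b))
    (fun mm => (((measurable_sampleMean mm.1).comp measurable_fst).sub_const a).mul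
      (((measurable_sampleMean mm.2).comp measurable_snd).sub_const b))
    fun mm _ => ((memLp_sampleMean hX mm.1).sub (memLp_const a)).integrable_mul
      ((memLp_sampleMean hY mm.2).sub (memLp_const b))]
  exact sum_eq_zero fun mm hmm => by rw [hcentred mm.1 (mem_product.1 hmm).1, mul_zero]

end SampleMean

section CII

theorem card_strata (n : ℕ) (K : Finset (Fin n)) (ℓ : ℕ) :
    (strata n K ℓ).card = (n - K.card).choose ℓ := by
  rw [strata, ← powersetCard_eq_filter, card_powersetCard, card_compl, Fintype.card_fin]

theorem sum_strata_eq_choose_mul_stratVal {n : ℕ} (ν : Finset (Fin n) → ℝ)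
    (K W : Finset (Fin n)) {ℓ : ℕ} (hℓ : ℓ ≤ n - K.card) :
    ∑ S ∈ strata n K ℓ, ν (S ∪ W) = ((n - K.card).choose ℓ : ℝ) * stratVal n ν K W ℓ := by
  rw [stratVal, mul_inv_cancel_left₀ (by exact_mod_cast (Nat.choose_pos hℓ).ne')]

theorem CII_eq_sum_stratVal (n : ℕ) (ν : Finset (Fin n) → ℝ) (lam : ℕ → ℝ)
    (K : Finset (Fin n)) :
    CII n ν lam K = ∑ ℓ ∈ range (n - K.card + 1), ((n - K.card).choose ℓ : ℝ) * lam ℓ *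
      ∑ W ∈ K.powerset, (-1 : ℝ) ^ (K.card - W.card) * stratVal n ν K W ℓ := by
  have hcard : ∀ S ∈ Kᶜ.powerset, S.card ∈ range (n - K.card + 1) := fun S hS => by
    rw [mem_range, Nat.lt_succ_iff]
    simpa [card_compl] using card_le_card (mem_powerset.1 hS)
  rw [CII, ← sum_fiberwise_of_maps_to hcard]
  refine sum_congr rfl fun ℓ hℓ => ?_
  change ∑ S ∈ strata n K ℓ, _ = _
  rw [sum_congr rfl fun S hS => by rw [(mem_filter.1 hS).2], ← mul_sum, sum_comm]
  simp_rw [← mul_sum, sum_strata_eq_choose_mul_stratVal ν K _ (Nat.lt_succ_iff.1 (mem_range.1 hℓ)),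
    mul_sum]
  exact sum_congr rfl fun W _ => by ring

/-- The error `Î_{K,ℓ}^W - I_{K,ℓ}^W` of an estimated stratum. -/
noncomputable def stratErr {Ω : Type*} (n : ℕ) (ν : Finset (Fin n) → ℝ) (K : Finset (Fin n))
    (S : Finset (Fin n) → ℕ → ℕ → Ω → Finset (Fin n)) (M : Finset (Fin n) → ℕ → Ω → ℕ)
    (W : Finset (Fin n)) (ℓ : ℕ) (ω : Ω) : ℝ :=
  sampleMean (fun m => ν (S W ℓ m ω ∪ W)) (M W ℓ ω) - stratVal n ν K W ℓ

theorem IhatCII_sub_CII {Ω : Type*} (n : ℕ) (ν : Finset (Fin n) → ℝ) (K : Finset (Fin n))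
    (lam : ℕ → ℝ) (L : ℕ → Finset ℕ) (S : Finset (Fin n) → ℕ → ℕ → Ω → Finset (Fin n))
    (M : Finset (Fin n) → ℕ → Ω → ℕ) (ω : Ω) :
    IhatCII n ν K lam L S M ω - CII n ν lam K
      = ∑ x ∈ K.powerset.sigma fun W => L W.card, ((n - K.card).choose x.2 : ℝ) * lam x.2 *
          (-1) ^ (K.card - x.1.card) * stratErr n ν K S M x.1 x.2 ω := by
  have hstrat : ∀ W ℓ, IhatStrat n ν K L S M W ℓ ω - stratVal n ν K W ℓ
      = if ℓ ∈ L W.card then stratErr n ν K S M W ℓ ω else 0 := fun W ℓ => by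
    unfold IhatStrat
    split_ifs <;> simp [stratErr, sampleMean]
  rw [IhatCII, CII_eq_sum_stratVal, ← sum_sub_distrib, sum_sigma]
  simp_rw [← mul_sub, ← sum_sub_distrib, ← mul_sub, hstrat, mul_sum]
  rw [sum_comm]
  refine sum_congr rfl fun W _ => ?_
  simp_rw [mul_ite, mul_zero]
  -- sizes `ℓ ∈ L |W|` beyond `n - k` carry the coefficient `C(n - k, ℓ) = 0`
  rw [sum_ite_mem, sum_subset inter_subset_right fun ℓ hℓ hℓ' => ?_]
  · exact sum_congr rfl fun ℓ _ => by ring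
  · have : n - K.card < ℓ := by simpa [hℓ] using hℓ'
    simp [Nat.choose_eq_zero_of_lt this]

theorem gam_pos {n k : ℕ} (hk : k ≤ n) : 0 < gam n k := by
  have hkn : (k : ℝ) ≤ n := by exact_mod_cast hk
  unfold gam
  split_ifs with h2
  · have : (2 : ℝ) ≤ n := by exact_mod_cast h2 ▸ hk
    nlinarith
  · have hpow : 0 < (n : ℝ) ^ (k - 1) := by
      rcases Nat.eq_zero_or_pos n with rfl | hn
      · simp [Nat.le_zero.1 hk]
      · positivity
    have : 0 < (n : ℝ) - k + 1 := by linarith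
    positivity

end CII

theorem abs_le_sum_univ_abs {α : Type*} [Fintype α] (f : α → ℝ) (a : α) :
    |f a| ≤ ∑ b, |f b| :=
  single_le_sum (f := fun b => |f b|) (fun _ _ => abs_nonneg _) (mem_univ a)

section Strata

variable {Ω : Type*} [MeasurableSpace Ω] {μ : Measure Ω} [IsProbabilityMeasure μ] {n : ℕ}
  (ν : Finset (Fin n) → ℝ) {K W : Finset (Fin n)} {ℓ : ℕ}

theorem measurable_union_comp {T : Ω → Finset (Fin n)} (hT : Measurable T) :
    Measurable fun ω => ν (T ω ∪ W) :=
  (Measurable.of_discrete (f := fun U => ν (U ∪ W))).comp hT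

theorem integral_eq_stratVal_of_uniform {T : Ω → Finset (Fin n)} (hT : Measurable T)
    (hunif : ∀ U, μ {ω | T ω = U}
      = if U ∈ strata n K ℓ then ((strata n K ℓ).card : ℝ≥0∞)⁻¹ else 0) :
    ∫ ω, ν (T ω ∪ W) ∂μ = stratVal n ν K W ℓ := by
  rw [integral_comp_eq_of_uniform hT hunif fun U => ν (U ∪ W), card_strata]
  rfl

theorem variance_eq_stratVar_of_uniform {T : Ω → Finset (Fin n)} (hT : Measurable T)
    (hunif : ∀ U, μ {ω | T ω = U}
      = if U ∈ strata n K ℓ then ((strata n K ℓ).card : ℝ≥0∞)⁻¹ else 0) :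
    variance (fun ω => ν (T ω ∪ W)) μ = stratVar n ν K W ℓ := by
  rw [variance_eq_integral (measurable_union_comp ν hT).aemeasurable,
    integral_eq_stratVal_of_uniform ν hT hunif,
    integral_comp_eq_of_uniform hT hunif fun U => (ν (U ∪ W) - stratVal n ν K W ℓ) ^ 2,
    card_strata]
  rfl

theorem measurable_pi_union_comp (W : Finset (Fin n)) :
    Measurable fun (v : ℕ → Finset (Fin n)) (m : ℕ) => ν (v m ∪ W) :=
  measurable_pi_lambda _ fun m => measurable_union_comp ν (measurable_pi_apply m)

variable {S : Finset (Fin n) → ℕ → ℕ → Ω → Finset (Fin n)} {M : Finset (Fin n) → ℕ → Ω → ℕ}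

theorem memLp_stratSample (hS : ∀ m, Measurable (S W ℓ m)) (m : ℕ) (p : ℝ≥0∞) :
    MemLp (fun ω => ν (S W ℓ m ω ∪ W)) p μ :=
  MemLp.of_bound (measurable_union_comp ν (hS m)).aestronglyMeasurable _
    (ae_of_all _ fun _ => abs_le_sum_univ_abs ν _)

theorem memLp_stratErr (hS : ∀ m, Measurable (S W ℓ m)) (hM : Measurable (M W ℓ))
    (p : ℝ≥0∞) : MemLp (stratErr n ν K S M W ℓ) p μ :=
  (memLp_sampleMean_randomCount (X := fun m ω => ν (S W ℓ m ω ∪ W))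
    (fun m => measurable_union_comp ν (hS m)) (fun _ _ => abs_le_sum_univ_abs ν _) hM p).sub
    (memLp_const _)

theorem integral_stratErr_sq_le {B : ℕ} (hB : 1 ≤ B) {p γ : ℝ} (hγ : 0 < γ) (hpγ : 1 / γ ≤ p)
    (hp1 : p ≤ 1) (hS : ∀ m, Measurable (S W ℓ m)) (hM : Measurable (M W ℓ))
    (hiid : iIndepFun (S W ℓ) μ)
    (hunif : ∀ m U, μ {ω | S W ℓ m ω = U}
      = if U ∈ strata n K ℓ then ((strata n K ℓ).card : ℝ≥0∞)⁻¹ else 0)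
    (hbin : ∀ j, μ {ω | M W ℓ ω = j + 1}
      = ENNReal.ofReal ((B.choose j : ℝ) * p ^ j * (1 - p) ^ (B - j)))
    (hMS : IndepFun (M W ℓ) (fun ω m => S W ℓ m ω) μ) :
    ∫ ω, stratErr n ν K S M W ℓ ω ^ 2 ∂μ ≤ γ / B * stratVar n ν K W ℓ := by
  have hp : 0 < p := (one_div_pos.2 hγ).trans_le hpγ
  have hinv : ((B + 1) * p)⁻¹ ≤ γ / B := by
    rw [inv_le_comm₀ (by positivity) (by positivity), inv_div]
    calc (B : ℝ) / γ = B * (1 / γ) := by ring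
      _ ≤ (B + 1) * p := by gcongr; linarith
  have hvar : 0 ≤ stratVar n ν K W ℓ := by unfold stratVar; positivity
  have hν : Measurable fun U : Finset (Fin n) => ν (U ∪ W) := Measurable.of_discrete
  calc ∫ ω, stratErr n ν K S M W ℓ ω ^ 2 ∂μ
      = stratVar n ν K W ℓ * ∫ ω, (M W ℓ ω : ℝ)⁻¹ ∂μ :=
        integral_sampleMean_randomCount_sub_sq (μ := μ) (X := fun m ω => ν (S W ℓ m ω ∪ W))
          (memLp_stratSample ν hS · 2) (fun i j hij => (hiid.indepFun hij).comp hν hν)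
          (fun m => integral_eq_stratVal_of_uniform ν (hS m) (hunif m))
          (fun m => variance_eq_stratVar_of_uniform ν (hS m) (hunif m)) hM
          (hMS.comp measurable_id (measurable_pi_union_comp ν W))
          (ae_mem_image_succ_of_shiftedBinomial hM hp.le hp1 hbin) (by simp)
    _ ≤ stratVar n ν K W ℓ * (γ / B) := by
        gcongr
        exact (integral_inv_le_of_shiftedBinomial hM hp hp1 hbin).trans hinv
    _ = γ / B * stratVar n ν K W ℓ := mul_comm _ _

theorem integral_stratErr_mul_eq_zero {W' : Finset (Fin n)} {ℓ' : ℕ}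
    (hS : ∀ m, Measurable (S W ℓ m)) (hS' : ∀ m, Measurable (S W' ℓ' m))
    (hM : Measurable (M W ℓ)) (hM' : Measurable (M W' ℓ'))
    (hunif : ∀ m U, μ {ω | S W ℓ m ω = U}
      = if U ∈ strata n K ℓ then ((strata n K ℓ).card : ℝ≥0∞)⁻¹ else 0)
    {s : Finset ℕ} (hs₀ : 0 ∉ s) (hs : ∀ᵐ ω ∂μ, M W ℓ ω ∈ s) (hs' : ∀ᵐ ω ∂μ, M W' ℓ' ω ∈ s)
    (hSS : IndepFun (fun ω m => S W ℓ m ω) (fun ω m => S W' ℓ' m ω) μ)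
    (hMS : IndepFun (fun ω => (M W ℓ ω, M W' ℓ' ω))
      (fun ω => ((fun m => S W ℓ m ω), fun m => S W' ℓ' m ω)) μ) :
    ∫ ω, stratErr n ν K S M W ℓ ω * stratErr n ν K S M W' ℓ' ω ∂μ = 0 :=
  integral_sampleMean_randomCount_mul_eq_zero (X := fun m ω => ν (S W ℓ m ω ∪ W))
    (Y := fun m ω => ν (S W' ℓ' m ω ∪ W')) (memLp_stratSample ν hS · 2)
    (memLp_stratSample ν hS' · 2) (fun m => integral_eq_stratVal_of_uniform ν (hS m) (hunif m))
    (hSS.comp (measurable_pi_union_comp ν W) (measurable_pi_union_comp ν W')) hM hM'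
    (hMS.comp measurable_id
      ((measurable_pi_union_comp ν W).prodMap (measurable_pi_union_comp ν W')))
    hs hs' hs₀

theorem integral_IhatCII_sub_CII_sq (lam : ℕ → ℝ) {L : ℕ → Finset ℕ}
    (hSmeas : ∀ W ℓ m, Measurable (S W ℓ m)) (hMmeas : ∀ W ℓ, Measurable (M W ℓ))
    (hunif : ∀ W, W ⊆ K → ∀ ℓ ∈ L W.card, ∀ m U, μ {ω | S W ℓ m ω = U}
      = if U ∈ strata n K ℓ then ((strata n K ℓ).card : ℝ≥0∞)⁻¹ else 0)
    {s : Finset ℕ} (hs₀ : 0 ∉ s) (hs : ∀ W, W ⊆ K → ∀ ℓ ∈ L W.card, ∀ᵐ ω ∂μ, M W ℓ ω ∈ s)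
    (hseqIndep : iIndepFun (fun (q : EstIdx n K L) ω m => S q.1.1 q.1.2 m ω) μ)
    (hcountIndep : IndepFun (fun ω (q : EstIdx n K L) => M q.1.1 q.1.2 ω)
      (fun ω (q : EstIdx n K L) m => S q.1.1 q.1.2 m ω) μ) :
    ∫ ω, (IhatCII n ν K lam L S M ω - CII n ν lam K) ^ 2 ∂μ
      = ∑ W ∈ K.powerset, ∑ ℓ ∈ L W.card, ((n - K.card).choose ℓ : ℝ) ^ 2 * lam ℓ ^ 2 *
          ∫ ω, stratErr n ν K S M W ℓ ω ^ 2 ∂μ := by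
  set E := K.powerset.sigma fun W => L W.card
  have hE : ∀ x ∈ E, x.1 ⊆ K ∧ x.2 ∈ L x.1.card := fun x hx => by simpa [E] using hx
  let e : ∀ x ∈ E, EstIdx n K L := fun x hx => ⟨(x.1, x.2), hE x hx⟩
  simp_rw [IhatCII_sub_CII]
  rw [integral_sum_sq_of_orthogonal E
    (fun x _ => (memLp_stratErr ν (hSmeas _ _) (hMmeas _ _) 2).const_mul _)
    fun x hx y hy hxy => ?_, sum_sigma]
  · simp_rw [mul_pow, ← pow_mul, pow_mul', neg_one_sq, one_pow, mul_one, integral_const_mul]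
  have hexy : e x hx ≠ e y hy := fun h =>
    hxy (Sigma.ext (congrArg (·.1.1) h) (heq_of_eq (congrArg (·.1.2) h)))
  simp_rw [mul_mul_mul_comm _ (stratErr n ν K S M x.1 x.2 _)]
  rw [integral_const_mul, integral_stratErr_mul_eq_zero ν (hSmeas _ _) (hSmeas _ _)
    (hMmeas _ _) (hMmeas _ _) (hunif _ (hE x hx).1 _ (hE x hx).2) hs₀
    (hs _ (hE x hx).1 _ (hE x hx).2) (hs _ (hE y hy).1 _ (hE y hy).2) (hseqIndep.indepFun hexy)
    (hcountIndep.comp ((measurable_pi_apply (e x hx)).prodMk (measurable_pi_apply (e y hy)))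
      ((measurable_pi_apply (e x hx)).prodMk (measurable_pi_apply (e y hy)))), mul_zero]

end Strata

theorem cii_estimate_mse_bound_general {Ω : Type*} [MeasureSpace Ω]
    [IsProbabilityMeasure (ℙ : Measure Ω)]
    (n : ℕ) (ν : Finset (Fin n) → ℝ) (K : Finset (Fin n))
    (lam : ℕ → ℝ)
    (L : ℕ → Finset ℕ)
    (S : Finset (Fin n) → ℕ → ℕ → Ω → Finset (Fin n))
    (M : Finset (Fin n) → ℕ → Ω → ℕ)
    (B : ℕ) (hB : 1 ≤ B) (p : Finset (Fin n) → ℕ → ℝ)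
    (hSmeas : ∀ W ℓ m, Measurable (S W ℓ m)) (hMmeas : ∀ W ℓ, Measurable (M W ℓ))
    -- within each estimated stratum the samples are i.i.d. uniform on the stratum
    (hiid : ∀ W, W ⊆ K → ∀ ℓ ∈ L W.card,
      iIndepFun (m := fun _ => finsetMeasurableSpace n) (S W ℓ) ℙ)
    (hunif : ∀ W, W ⊆ K → ∀ ℓ ∈ L W.card, ∀ (m : ℕ) (T : Finset (Fin n)),
      ℙ {ω | S W ℓ m ω = T}
        = if T ∈ strata n K ℓ then ((strata n K ℓ).card : ℝ≥0∞)⁻¹ else 0)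
    -- counts: `M_{W,ℓ} = 1 + Y_{W,ℓ}` with `Y_{W,ℓ} ~ Binomial(B̃, p_{W,ℓ})`,
    -- `p_{W,ℓ} ≥ 1/γ_k`
    (hp : ∀ W, W ⊆ K → ∀ ℓ ∈ L W.card,
      1 / gam n K.card ≤ p W ℓ ∧ p W ℓ ≤ 1)
    (hbin : ∀ W, W ⊆ K → ∀ ℓ ∈ L W.card, ∀ j : ℕ,
      ℙ {ω | M W ℓ ω = j + 1}
        = ENNReal.ofReal ((B.choose j : ℝ) * p W ℓ ^ j * (1 - p W ℓ) ^ (B - j)))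
    -- the sample sequences of distinct estimated strata are mutually independent
    (hseqIndep : iIndepFun
      (m := fun _ : EstIdx n K L => (inferInstance : MeasurableSpace (ℕ → Finset (Fin n))))
      (fun p ω => fun m => S p.1.1 p.1.2 m ω) ℙ)
    -- and independent of the vector of all counts
    (hcountIndep : IndepFun
      (fun ω => fun q : EstIdx n K L => M q.1.1 q.1.2 ω)
      (fun ω => fun (q : EstIdx n K L) (m : ℕ) => S q.1.1 q.1.2 m ω) ℙ) :
    ∫ ω, (IhatCII n ν K lam L S M ω - CII n ν lam K) ^ 2 ∂ℙ
      ≤ gam n K.card / B * ∑ W ∈ K.powerset, ∑ ℓ ∈ L W.card,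
          ((n - K.card).choose ℓ : ℝ) ^ 2 * lam ℓ ^ 2 * stratVar n ν K W ℓ := by
  have hγ : 0 < gam n K.card := gam_pos (by simpa using card_le_univ K)
  rw [integral_IhatCII_sub_CII_sq ν lam hSmeas hMmeas hunif (s := (range (B + 1)).image (· + 1))
    (by simp) (fun W hW ℓ hℓ => ae_mem_image_succ_of_shiftedBinomial (hMmeas W ℓ)
      ((one_div_pos.2 hγ).le.trans (hp W hW ℓ hℓ).1) (hp W hW ℓ hℓ).2 (hbin W hW ℓ hℓ))
    hseqIndep hcountIndep, mul_sum]
  refine sum_le_sum fun W hW => ?_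
  rw [mem_powerset] at hW
  rw [mul_sum]
  refine sum_le_sum fun ℓ hℓ => ?_
  let e : EstIdx n K L := ⟨(W, ℓ), hW, hℓ⟩
  rw [mul_left_comm]
  exact mul_le_mul_of_nonneg_left (integral_stratErr_sq_le ν hB hγ (hp W hW ℓ hℓ).1
    (hp W hW ℓ hℓ).2 (hSmeas W ℓ) (hMmeas W ℓ) (hiid W hW ℓ hℓ) (hunif W hW ℓ hℓ)
    (hbin W hW ℓ hℓ) (hcountIndep.comp (measurable_pi_apply e) (measurable_pi_apply e)))
    (by positivity)

/-- **Mean squared error bound for the CII estimate (Corollary 4.3).** -/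
theorem cii_estimate_mse_bound {Ω : Type*} [MeasureSpace Ω]
    [IsProbabilityMeasure (ℙ : Measure Ω)]
    (n : ℕ) (ν : Finset (Fin n) → ℝ) (K : Finset (Fin n)) (hk : 2 ≤ K.card)
    (lam : ℕ → ℝ)
    (L : ℕ → Finset ℕ) (hL : ∀ w, L w ⊆ Finset.range (n - K.card + 1))
    (S : Finset (Fin n) → ℕ → ℕ → Ω → Finset (Fin n))
    (M : Finset (Fin n) → ℕ → Ω → ℕ)
    (B : ℕ) (hB : 1 ≤ B) (p : Finset (Fin n) → ℕ → ℝ)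
    (hSmeas : ∀ W ℓ m, Measurable (S W ℓ m)) (hMmeas : ∀ W ℓ, Measurable (M W ℓ))
    -- within each estimated stratum the samples are i.i.d. uniform on the stratum
    (hiid : ∀ W, W ⊆ K → ∀ ℓ ∈ L W.card,
      iIndepFun (m := fun _ => finsetMeasurableSpace n) (S W ℓ) ℙ)
    (hunif : ∀ W, W ⊆ K → ∀ ℓ ∈ L W.card, ∀ (m : ℕ) (T : Finset (Fin n)),
      ℙ {ω | S W ℓ m ω = T}
        = if T ∈ strata n K ℓ then ((strata n K ℓ).card : ℝ≥0∞)⁻¹ else 0)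
    -- counts: `M_{W,ℓ} = 1 + Y_{W,ℓ}` with `Y_{W,ℓ} ~ Binomial(B̃, p_{W,ℓ})`,
    -- `p_{W,ℓ} ≥ 1/γ_k`
    (hp : ∀ W, W ⊆ K → ∀ ℓ ∈ L W.card,
      1 / gam n K.card ≤ p W ℓ ∧ p W ℓ ≤ 1)
    (hbin : ∀ W, W ⊆ K → ∀ ℓ ∈ L W.card, ∀ j : ℕ,
      ℙ {ω | M W ℓ ω = j + 1}
        = ENNReal.ofReal ((B.choose j : ℝ) * p W ℓ ^ j * (1 - p W ℓ) ^ (B - j)))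
    -- the sample sequences of distinct estimated strata are mutually independent
    (hseqIndep : iIndepFun
      (m := fun _ : EstIdx n K L => (inferInstance : MeasurableSpace (ℕ → Finset (Fin n))))
      (fun p ω => fun m => S p.1.1 p.1.2 m ω) ℙ)
    -- and independent of the vector of all counts
    (hcountIndep : IndepFun
      (fun ω => fun q : EstIdx n K L => M q.1.1 q.1.2 ω)
      (fun ω => fun (q : EstIdx n K L) (m : ℕ) => S q.1.1 q.1.2 m ω) ℙ) :
    ∫ ω, (IhatCII n ν K lam L S M ω - CII n ν lam K) ^ 2 ∂ℙ
      ≤ gam n K.card / B * ∑ W ∈ K.powerset, ∑ ℓ ∈ L W.card,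
          ((n - K.card).choose ℓ : ℝ) ^ 2 * lam ℓ ^ 2 * stratVar n ν K W ℓ :=
  cii_estimate_mse_bound_general n ν K lam L S M B hB p hSmeas hMmeas hiid hunif hp hbin hseqIndep
    hcountIndep
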